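/- Let n ≥ 2, ε, φ ∈ ℝ, and θ ∈ (0, π). The number λ = 2 cos θ is an eigenvalue of T_{n,ε,φ} if and only if sin((n+1)θ) − (ε + φ) sin(nθ) + εφ sin((n−1)θ) = 0. In that case, the vector v ∈ ℝ^n with entries v_i = sin(iθ) − ε sin((i−1)θ), i = 1, …, n, is nonzero and satisfies T_{n,ε,φ} v = λ v. -/

import Mathlib

open Matrix Real Filter

/-- The n×n tridiagonal matrix `T_{n,ε,φ}` with `(T)_{11} = ε`, `(T)_{nn} = φ`,
zero elsewhere on the diagonal, and ones on the first super- and subdiagonals. -/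
noncomputable def Ttri (n : ℕ) (e f : ℝ) : Matrix (Fin n) (Fin n) ℝ :=
  fun i j =>
    if i = j then (if (i : ℕ) = 0 then e else if (i : ℕ) = n - 1 then f else 0)
    else if (i : ℕ) + 1 = (j : ℕ) ∨ (j : ℕ) + 1 = (i : ℕ) then 1 else 0

/-- `x` is an eigenvalue of `T_{n,ε,φ}`. -/
def HasEigen (n : ℕ) (e f x : ℝ) : Prop :=
  ∃ v : Fin n → ℝ, v ≠ 0 ∧ (Ttri n e f).mulVec v = x • v

/-!
An eigenvector `v` of `T_{n,ε,φ}` for `λ = 2 cos θ` is a solution of the three-term recurrence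
`v_{k-1} + v_{k+1} = λ v_k`, with boundary conditions imposed by the first and last rows. The first
row and the recurrence determine `v` from `v_1`, and `sin(kθ) - ε sin((k-1)θ)` solves them because
`sin((x-1)θ) + sin((x+1)θ) = 2 cos θ sin(xθ)`. As `sin θ ≠ 0`, every eigenvector is therefore a
multiple of this sequence, and `λ` is an eigenvalue exactly when the sequence also satisfies the
last row, which unfolds to the stated trigonometric equation.
-/
theorem eq_of_three_term_recurrence {R : Type*} [CommRing R] {N : ℕ} {x : R} {u v : ℕ → R}
    (hu : ∀ k, k + 2 < N → u k + u (k + 2) = x * u (k + 1))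
    (hv : ∀ k, k + 2 < N → v k + v (k + 2) = x * v (k + 1))
    (h0 : u 0 = v 0) (h1 : u 1 = v 1) : ∀ k < N, u k = v k := by
  intro k
  induction k using Nat.twoStepInduction with
  | zero => exact fun _ => h0
  | one => exact fun _ => h1
  | more k ih₀ ih₁ =>
    intro hk
    linear_combination hu k hk - hv k hk - ih₀ (by omega) + x * ih₁ (by omega)

theorem sin_sub_one_mul_add_sin_add_one_mul (x θ : ℝ) :
    sin ((x - 1) * θ) + sin ((x + 1) * θ) = 2 * cos θ * sin (x * θ) := by
  rw [sub_mul, add_mul, one_mul, ← two_mul_sin_mul_cos]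
  ring

theorem Ttri_mulVec_apply {n : ℕ} (e f : ℝ) (u : ℕ → ℝ) (i : Fin n) :
    (Ttri n e f *ᵥ fun j => u j) i =
      (if (i : ℕ) = 0 then e else if (i : ℕ) = n - 1 then f else 0) * u i +
        (if (i : ℕ) = 0 then 0 else u (i - 1)) + (if (i : ℕ) + 1 < n then u (i + 1) else 0) := by
  set d := if (i : ℕ) = 0 then e else if (i : ℕ) = n - 1 then f else 0
  have hrow : ∀ j : Fin n, Ttri n e f i j * u j =
      (if (j : ℕ) = i then d * u j else 0) + (if (j : ℕ) + 1 = i then u j else 0) +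
        (if (j : ℕ) = i + 1 then u j else 0) := by
    intro j
    simp only [Ttri, Fin.ext_iff, d]
    split_ifs <;> first | omega | simp_all
  simp only [mulVec, dotProduct, hrow]
  rw [Fin.sum_univ_eq_sum_range (fun j => (if j = (i : ℕ) then d * u j else 0) +
    (if j + 1 = i then u j else 0) + (if j = i + 1 then u j else 0)),
    Finset.sum_add_distrib, Finset.sum_add_distrib, Finset.sum_ite_eq', Finset.sum_ite_eq']
  obtain ⟨i, hi⟩ := i
  cases i with
  | zero => simp [hi]
  | succ m =>
    simp only [Nat.add_right_cancel_iff, Finset.sum_ite_eq', Finset.mem_range]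
    simp [hi, show m < n by omega]

theorem Ttri_mulVec_eq_smul_iff {n : ℕ} (hn : 2 ≤ n) (e f x : ℝ) (u : ℕ → ℝ) :
    (Ttri n e f *ᵥ fun j => u j) = x • (fun j : Fin n => u j) ↔
      e * u 0 + u 1 = x * u 0 ∧ (∀ k, k + 2 < n → u k + u (k + 2) = x * u (k + 1)) ∧
        u (n - 2) + f * u (n - 1) = x * u (n - 1) := by
  obtain ⟨m, rfl⟩ : ∃ m, n = m + 2 := ⟨n - 2, by omega⟩
  simp only [funext_iff, Fin.forall_iff, Ttri_mulVec_apply, Pi.smul_apply, smul_eq_mul,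
    Nat.add_sub_cancel, Nat.add_one_sub_one]
  constructor
  · intro h
    refine ⟨by simpa using h 0 (by omega), fun k hk => ?_, ?_⟩
    · simpa [show k ≠ m by omega, hk] using h (k + 1) (by omega)
    · simpa [add_comm (f * _)] using h (m + 1) (by omega)
  · rintro ⟨h0, hrec, hlast⟩ i hi
    rcases i with _ | k
    · simpa using h0
    · obtain rfl | hk := eq_or_ne k m
      · simpa [add_comm (f * _)] using hlast
      · simpa [hk, show k + 2 < m + 2 by omega] using hrec k (by omega)

/-- `eigenSeq e θ k` is the paper's `v_{k+1}`: entries are indexed from `0`. -/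
noncomputable def eigenSeq (e θ : ℝ) (k : ℕ) : ℝ :=
  sin (((k : ℝ) + 1) * θ) - e * sin ((k : ℝ) * θ)

section eigenSeq

variable (e θ : ℝ)

theorem eigenSeq_zero : eigenSeq e θ 0 = sin θ := by
  simp [eigenSeq]

theorem eigenSeq_first_row : e * eigenSeq e θ 0 + eigenSeq e θ 1 = 2 * cos θ * eigenSeq e θ 0 := by
  simp only [eigenSeq, Nat.cast_zero, Nat.cast_one, zero_add, zero_mul, sin_zero, one_mul,
    one_add_one_eq_two, sin_two_mul]
  ring

theorem eigenSeq_recurrence (k : ℕ) :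
    eigenSeq e θ k + eigenSeq e θ (k + 2) = 2 * cos θ * eigenSeq e θ (k + 1) := by
  have h₁ := sin_sub_one_mul_add_sin_add_one_mul ((k : ℝ) + 1) θ
  have h₂ := sin_sub_one_mul_add_sin_add_one_mul ((k : ℝ) + 2) θ
  simp only [eigenSeq, Nat.cast_add, Nat.cast_ofNat, Nat.cast_one]
  ring_nf at h₁ h₂ ⊢
  linear_combination h₂ - e * h₁

end eigenSeq

theorem eigenSeq_sub_mul_eigenSeq_pred {n : ℕ} (hn : 1 ≤ n) (e f θ : ℝ) :
    eigenSeq e θ n - f * eigenSeq e θ (n - 1) =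
      sin (((n : ℝ) + 1) * θ) - (e + f) * sin ((n : ℝ) * θ) +
        e * f * sin (((n : ℝ) - 1) * θ) := by
  simp only [eigenSeq, Nat.cast_pred hn, sub_add_cancel]
  ring

theorem Ttri_mulVec_eigenSeq_eq_smul_iff {n : ℕ} (hn : 2 ≤ n) (e f θ : ℝ) :
    (Ttri n e f *ᵥ fun i => eigenSeq e θ i) = (2 * cos θ) • (fun i : Fin n => eigenSeq e θ i) ↔
      sin (((n : ℝ) + 1) * θ) - (e + f) * sin ((n : ℝ) * θ) +
        e * f * sin (((n : ℝ) - 1) * θ) = 0 := by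
  rw [Ttri_mulVec_eq_smul_iff hn, ← eigenSeq_sub_mul_eigenSeq_pred (by omega)]
  simp only [eigenSeq_first_row, eigenSeq_recurrence, implies_true, true_and]
  obtain ⟨m, rfl⟩ : ∃ m, n = m + 2 := ⟨n - 2, by omega⟩
  have hrec := eigenSeq_recurrence e θ m
  simp only [Nat.add_sub_cancel, Nat.add_one_sub_one]
  constructor <;> intro h <;> linear_combination hrec - h

theorem sin_smul_eq_of_Ttri_mulVec_eq_smul {n : ℕ} (hn : 2 ≤ n) {e f θ : ℝ} {w : Fin n → ℝ}
    (hw : Ttri n e f *ᵥ w = (2 * cos θ) • w) :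
    sin θ • w = w ⟨0, by omega⟩ • fun i : Fin n => eigenSeq e θ i := by
  set u : ℕ → ℝ := fun k => if h : k < n then w ⟨k, h⟩ else 0
  have hwu : w = fun i : Fin n => u i := by
    funext i
    simp [u]
  rw [hwu, Ttri_mulVec_eq_smul_iff hn] at hw
  obtain ⟨h₀, hrec, -⟩ := hw
  have key : ∀ k < n, sin θ * u k = u 0 * eigenSeq e θ k := by
    refine eq_of_three_term_recurrence (x := 2 * cos θ) (fun k hk => ?_)
      (fun k _ => by linear_combination u 0 * eigenSeq_recurrence e θ k) ?_ ?_
    · linear_combination sin θ * hrec k hk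
    · rw [eigenSeq_zero, mul_comm]
    · have h₁ := eigenSeq_first_row e θ
      rw [eigenSeq_zero] at h₁
      linear_combination sin θ * h₀ - u 0 * h₁
  rw [hwu]
  funext i
  exact key i i.2

theorem eigenSeq_ne_zero {n : ℕ} (hn : 0 < n) {e θ : ℝ} (hθ : sin θ ≠ 0) :
    (fun i : Fin n => eigenSeq e θ i) ≠ 0 :=
  fun h => hθ (by simpa [eigenSeq_zero] using congrFun h ⟨0, hn⟩)

theorem hasEigen_two_mul_cos_iff {n : ℕ} (hn : 2 ≤ n) {e f θ : ℝ} (hθ : sin θ ≠ 0) :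
    HasEigen n e f (2 * cos θ) ↔
      (Ttri n e f *ᵥ fun i => eigenSeq e θ i) = (2 * cos θ) • (fun i : Fin n => eigenSeq e θ i) := by
  refine ⟨fun ⟨w, hw₀, hw⟩ => ?_, fun h => ⟨_, eigenSeq_ne_zero (by omega) hθ, h⟩⟩
  have hmul := sin_smul_eq_of_Ttri_mulVec_eq_smul hn hw
  have hw0 : w ⟨0, by omega⟩ ≠ 0 := by
    intro h0
    rw [h0, zero_smul, smul_eq_zero] at hmul
    exact hmul.elim hθ hw₀
  have hs : (fun i : Fin n => eigenSeq e θ i) = ((w ⟨0, by omega⟩)⁻¹ * sin θ) • w := by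
    rw [mul_smul, hmul, smul_smul, inv_mul_cancel₀ hw0, one_smul]
  rw [hs, mulVec_smul, hw, smul_comm]

theorem stmt12 (n : ℕ) (hn : 2 ≤ n) (e f θ : ℝ) (hθ : θ ∈ Set.Ioo 0 π) :
    (HasEigen n e f (2 * Real.cos θ) ↔
      Real.sin (((n : ℝ) + 1) * θ) - (e + f) * Real.sin ((n : ℝ) * θ) +
        e * f * Real.sin (((n : ℝ) - 1) * θ) = 0) ∧
    (Real.sin (((n : ℝ) + 1) * θ) - (e + f) * Real.sin ((n : ℝ) * θ) +
        e * f * Real.sin (((n : ℝ) - 1) * θ) = 0 →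
      ((fun i : Fin n =>
          Real.sin (((i : ℕ) + 1 : ℝ) * θ) - e * Real.sin ((i : ℕ) * θ)) : Fin n → ℝ) ≠ 0 ∧
      (Ttri n e f).mulVec
          (fun i : Fin n =>
            Real.sin (((i : ℕ) + 1 : ℝ) * θ) - e * Real.sin ((i : ℕ) * θ)) =
        (2 * Real.cos θ) •
          ((fun i : Fin n =>
            Real.sin (((i : ℕ) + 1 : ℝ) * θ) - e * Real.sin ((i : ℕ) * θ)) : Fin n → ℝ)) := by
  have hsin : sin θ ≠ 0 := (sin_pos_of_pos_of_lt_pi hθ.1 hθ.2).ne'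
  have hvec := Ttri_mulVec_eigenSeq_eq_smul_iff hn e f θ
  exact ⟨(hasEigen_two_mul_cos_iff hn hsin).trans hvec,
    fun h => ⟨eigenSeq_ne_zero (by omega) hsin, hvec.2 h⟩⟩
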